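/- Let f : ℝⁿ → ℝ be C² satisfying the PL inequality with constant μ around a local minimum x̄ with solution set S. Then f satisfies the Morse–Bott property with constant μ at x̄: S is a C¹ submanifold near x̄, ker ∇²f(x̄) = T_{x̄}S, and ⟨v, ∇²f(x̄)v⟩ ≥ μ‖v‖² for all v ∈ N_{x̄}S. -/

import Mathlib

/-!
Write `H = ∇²f(x̄)`. Along rays `x̄ + τ v`, the Taylor expansions `f ≈ f(x̄) + τ²⟪H v, v⟫/2` and
`∇f ≈ τ H v` turn local minimality into `H ⪰ 0` and the PL inequality into
`μ ⟪H v, v⟫ ≤ ‖H v‖²`. Hence every nonzero eigenvalue of `H` is at least `μ`, which is the bound on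
the normal space `(ker H)ᗮ`.

For the submanifold take `φ = A ∘ ∇f`, where `A` is an isometric chart of the orthogonal
projection onto `range H = (ker H)ᗮ`: `Dφ(x̄) = A H` is onto with kernel `ker H`, and stays onto
near `x̄`. A zero of `φ` near `x̄` is a point where `∇f ∈ ker H`; there the gradient step
`x - μ⁻¹ ∇f(x)` sees no curvature, so Taylor and PL would take `f` below `f(x̄)` unless `∇f(x) = 0`.
Finally, by PL, critical points near `x̄` are exactly the local minima at level `f(x̄)`.
-/

open Filter Topology InnerProductSpace Set
open scoped RealInnerProductSpace

section Ray

variable {E : Type*} [NormedAddCommGroup E] [NormedSpace ℝ E]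

theorem hasDerivAt_add_smul (x v : E) (τ : ℝ) :
    HasDerivAt (fun τ : ℝ => x + τ • v) v τ := by
  simpa using ((hasDerivAt_id τ).smul_const v).const_add x

theorem tendsto_add_smul_nhdsGT (x v : E) :
    Tendsto (fun τ : ℝ => x + τ • v) (𝓝[>] 0) (𝓝 x) := by
  simpa using ((hasDerivAt_add_smul x v 0).continuousAt.tendsto).mono_left nhdsWithin_le_nhds

theorem HasFDerivAt.tendsto_inv_smul_add_smul {F : Type*} [NormedAddCommGroup F]
    [NormedSpace ℝ F] {g : E → F} {L : E →L[ℝ] F} {x : E} (hg : HasFDerivAt g L x)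
    (h0 : g x = 0) (v : E) :
    Tendsto (fun τ : ℝ => τ⁻¹ • g (x + τ • v)) (𝓝[>] 0) (𝓝 (L v)) := by
  simpa [h0] using
    (hg.comp_hasDerivAt_of_eq 0 (hasDerivAt_add_smul x v 0) (by simp)).tendsto_slope_zero_right

end Ray

section Gradient

variable {E : Type*} [NormedAddCommGroup E] [InnerProductSpace ℝ E] [CompleteSpace E]
  {f : E → ℝ} {x : E} {H : E →L[ℝ] E}

theorem IsLocalMin.gradient_eq_zero (h : IsLocalMin f x) : gradient f x = 0 := by
  simp [gradient, h.fderiv_eq_zero]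

theorem ContDiff.gradient {m n : WithTop ℕ∞} (hf : ContDiff ℝ n f) (hmn : m + 1 ≤ n) :
    ContDiff ℝ m (gradient f) :=
  (toDual ℝ E).symm.contDiff.comp (hf.fderiv_right hmn)

theorem inner_fderiv_gradient_apply (v w : E) :
    ⟪fderiv ℝ (gradient f) x v, w⟫ = fderiv ℝ (fderiv ℝ f) x v w := by
  have : gradient f = (toDual ℝ E).symm ∘ fderiv ℝ f := rfl
  rw [this, LinearIsometryEquiv.comp_fderiv]
  exact toDual_symm_apply

theorem ContDiffAt.isSymmetric_fderiv_gradient (hf : ContDiffAt ℝ 2 f x) :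
    (fderiv ℝ (gradient f) x : E →ₗ[ℝ] E).IsSymmetric := by
  intro v w
  have hsymm := hf.isSymmSndFDerivAt (by simp [minSmoothness_of_isRCLikeNormedField])
  rw [ContinuousLinearMap.coe_coe, inner_fderiv_gradient_apply, real_inner_comm,
    inner_fderiv_gradient_apply, hsymm]

theorem Convex.abs_sub_sub_inner_gradient_sub_le {s : Set E} (hs : Convex ℝ s)
    (hf : ∀ z ∈ s, DifferentiableAt ℝ f z) (hG : ∀ z ∈ s, DifferentiableAt ℝ (gradient f) z)
    {ε : ℝ} (hH : ∀ z ∈ s, ‖fderiv ℝ (gradient f) z - H‖ ≤ ε)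
    {y : E} (hx : x ∈ s) (hy : y ∈ s) :
    |f y - f x - ⟪gradient f x, y - x⟫ - ⟪H (y - x), y - x⟫ / 2| ≤ ε * ‖y - x‖ ^ 2 := by
  set w := y - x
  have hseg : ∀ t ∈ Icc (0 : ℝ) 1, x + t • w ∈ s := fun t ht => by
    simpa [w] using hs.add_smul_sub_mem hx hy ht
  set m : ℝ → ℝ := fun t => f (x + t • w) - t * ⟪gradient f x, w⟫ - t ^ 2 / 2 * ⟪H w, w⟫
  have hm : ∀ t ∈ Icc (0 : ℝ) 1, HasDerivAt m
      (⟪gradient f (x + t • w) - gradient f x - H (x + t • w - x), w⟫) t := by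
    intro t ht
    have hft := (hf _ (hseg t ht)).hasFDerivAt.comp_hasDerivAt t (hasDerivAt_add_smul x w t)
    rw [← inner_gradient_left] at hft
    refine ((hft.sub (hasDerivAt_mul_const _)).sub
      (((hasDerivAt_pow 2 t).div_const 2).mul_const ⟪H w, w⟫)).congr_deriv ?_
    simp only [add_sub_cancel_left, map_smul, inner_sub_left, real_inner_smul_left]
    ring
  have hm' : ∀ t ∈ Ico (0 : ℝ) 1,
      ‖⟪gradient f (x + t • w) - gradient f x - H (x + t • w - x), w⟫‖ ≤ ε * ‖w‖ ^ 2 := by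
    intro t ht
    have hts : x + t • w ∈ s := hseg t (Ico_subset_Icc_self ht)
    have hε : 0 ≤ ε := (norm_nonneg _).trans (hH x hx)
    have htw : ‖x + t • w - x‖ ≤ ‖w‖ := by
      rw [add_sub_cancel_left, norm_smul, Real.norm_of_nonneg ht.1]
      exact mul_le_of_le_one_left (norm_nonneg w) ht.2.le
    calc _ ≤ ‖gradient f (x + t • w) - gradient f x - H (x + t • w - x)‖ * ‖w‖ :=
          norm_inner_le_norm _ _
      _ ≤ ε * ‖x + t • w - x‖ * ‖w‖ := by
          gcongr
          exact Convex.norm_image_sub_le_of_norm_fderiv_le' hG hH hs hx hts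
      _ ≤ ε * ‖w‖ * ‖w‖ := by gcongr
      _ = ε * ‖w‖ ^ 2 := by ring
  have key := norm_image_sub_le_of_norm_deriv_le_segment'
    (fun t ht => (hm t ht).hasDerivWithinAt) hm' 1 (right_mem_Icc.2 zero_le_one)
  have hm1 : m 1 = f y - ⟪gradient f x, w⟫ - ⟪H w, w⟫ / 2 := by simp [m, w]; ring
  have hm0 : m 0 = f x := by simp [m]
  rw [hm1, hm0, Real.norm_eq_abs, sub_zero, mul_one] at key
  convert key using 2
  ring

theorem tendsto_sub_div_sq_of_gradient_eq_zero (hf : ∀ᶠ z in 𝓝 x, DifferentiableAt ℝ f z)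
    (hG : HasFDerivAt (gradient f) H x) (h0 : gradient f x = 0) (v : E) :
    Tendsto (fun τ : ℝ => (f (x + τ • v) - f x) / τ ^ 2) (𝓝[>] 0) (𝓝 (⟪H v, v⟫ / 2)) := by
  have hderiv : ∀ᶠ τ in 𝓝[>] (0 : ℝ),
      HasDerivAt (fun τ : ℝ => f (x + τ • v) - f x) ⟪gradient f (x + τ • v), v⟫ τ := by
    filter_upwards [tendsto_add_smul_nhdsGT x v hf] with τ hτ
    rw [inner_gradient_left]
    exact (hτ.hasFDerivAt.comp_hasDerivAt τ (hasDerivAt_add_smul x v τ)).sub_const (f x)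
  refine HasDerivAt.lhopital_zero_nhdsGT hderiv
    (Eventually.of_forall fun τ => hasDerivAt_pow 2 τ) ?_ ?_ ?_ ?_
  · filter_upwards [self_mem_nhdsWithin] with τ (hτ : 0 < τ)
    positivity
  · simpa using (hf.self_of_nhds.continuousAt.tendsto.comp (tendsto_add_smul_nhdsGT x v)).sub_const
      (f x)
  · simpa using ((continuous_pow 2).tendsto (0 : ℝ)).mono_left nhdsWithin_le_nhds
  · refine (((hG.tendsto_inv_smul_add_smul h0 v).inner (𝕜 := ℝ) tendsto_const_nhds).div_const
      2).congr' ?_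
    filter_upwards [self_mem_nhdsWithin] with τ (hτ : 0 < τ)
    rw [real_inner_smul_left]
    field_simp
    ring

theorem IsLocalMin.inner_hessian_nonneg (hmin : IsLocalMin f x)
    (hf : ∀ᶠ z in 𝓝 x, DifferentiableAt ℝ f z) (hG : HasFDerivAt (gradient f) H x) (v : E) :
    0 ≤ ⟪H v, v⟫ := by
  have hlim := tendsto_sub_div_sq_of_gradient_eq_zero hf hG hmin.gradient_eq_zero v
  have : 0 ≤ ⟪H v, v⟫ / 2 := ge_of_tendsto hlim <| by
    filter_upwards [tendsto_add_smul_nhdsGT x v hmin] with τ hτ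
    exact div_nonneg (sub_nonneg.2 hτ) (sq_nonneg τ)
  linarith

theorem inner_hessian_mul_le_of_pl {μ : ℝ} (hμ : 0 < μ)
    (hPL : ∀ᶠ z in 𝓝 x, f z - f x ≤ 1 / (2 * μ) * ‖gradient f z‖ ^ 2)
    (hf : ∀ᶠ z in 𝓝 x, DifferentiableAt ℝ f z) (hG : HasFDerivAt (gradient f) H x)
    (h0 : gradient f x = 0) (v : E) :
    μ * ⟪H v, v⟫ ≤ ‖H v‖ ^ 2 := by
  have hlim : ⟪H v, v⟫ / 2 ≤ 1 / (2 * μ) * ‖H v‖ ^ 2 := by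
    refine le_of_tendsto_of_tendsto (tendsto_sub_div_sq_of_gradient_eq_zero hf hG h0 v)
      (((hG.tendsto_inv_smul_add_smul h0 v).norm.pow 2).const_mul _) ?_
    filter_upwards [self_mem_nhdsWithin, tendsto_add_smul_nhdsGT x v hPL] with τ (hτ : 0 < τ) hτPL
    rw [norm_smul, norm_inv, Real.norm_of_nonneg hτ.le, mul_pow, inv_pow, mul_comm (τ ^ 2)⁻¹,
      ← mul_assoc, ← div_eq_mul_inv]
    exact div_le_div_of_nonneg_right hτPL (sq_nonneg τ)
  field_simp at hlim
  linarith

theorem Convex.gradient_eq_zero_of_hessian_apply_eq_zero {s : Set E} (hs : Convex ℝ s)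
    (hf : ∀ z ∈ s, DifferentiableAt ℝ f z) (hG : ∀ z ∈ s, DifferentiableAt ℝ (gradient f) z)
    {μ m : ℝ} (hμ : 0 < μ) (hH : ∀ z ∈ s, ‖fderiv ℝ (gradient f) z - H‖ ≤ μ / 4)
    (hmin : ∀ z ∈ s, m ≤ f z) (hx : x ∈ s) (hPL : f x - m ≤ 1 / (2 * μ) * ‖gradient f x‖ ^ 2)
    (hstep : x - μ⁻¹ • gradient f x ∈ s) (hker : H (gradient f x) = 0) :
    gradient f x = 0 := by
  set g := gradient f x
  have hyx : x - μ⁻¹ • g - x = -(μ⁻¹ • g) := by abel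
  have htaylor := hs.abs_sub_sub_inner_gradient_sub_le hf hG hH hx hstep
  rw [hyx, map_neg, map_smul, hker, smul_zero, neg_zero, inner_zero_left, zero_div, sub_zero,
    inner_neg_right, real_inner_smul_right, real_inner_self_eq_norm_sq, norm_neg, norm_smul,
    Real.norm_of_nonneg (inv_nonneg.2 hμ.le)] at htaylor
  have hdescent := (abs_le.1 htaylor).2
  have hlow := hmin _ hstep
  -- `f` would drop to `m + (1/2 - 1 + 1/4) ‖g‖² / μ` after the step
  have hsq : ‖g‖ ^ 2 ≤ 0 := by
    have : μ / 4 * (μ⁻¹ * ‖g‖) ^ 2 = μ⁻¹ / 4 * ‖g‖ ^ 2 := by field_simp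
    have h2 : 1 / (2 * μ) = μ⁻¹ / 2 := by field_simp
    rw [this] at hdescent
    rw [h2] at hPL
    nlinarith [inv_pos.2 hμ]
  simpa using hsq

theorem eventually_gradient_eq_zero_of_hessian_apply_eq_zero (hf : ContDiff ℝ 2 f)
    (hmin : IsLocalMin f x) {μ : ℝ} (hμ : 0 < μ)
    (hPL : ∀ᶠ z in 𝓝 x, f z - f x ≤ 1 / (2 * μ) * ‖gradient f z‖ ^ 2) :
    ∀ᶠ z in 𝓝 x, fderiv ℝ (gradient f) x (gradient f z) = 0 → gradient f z = 0 := by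
  have hG : ContDiff ℝ 1 (gradient f) := hf.gradient (by norm_num)
  obtain ⟨r, hr, hball⟩ := Metric.eventually_nhds_iff_ball.1 <|
    ((hG.continuous_fderiv one_ne_zero).continuousAt.eventually
      (Metric.closedBall_mem_nhds _ (by positivity : 0 < μ / 4))).and hmin
  have hstep : Tendsto (fun z => z - μ⁻¹ • gradient f z) (𝓝 x) (𝓝 x) := by
    have hcont : Continuous fun z => z - μ⁻¹ • gradient f z := by
      have := hG.continuous
      fun_prop
    simpa [hmin.gradient_eq_zero] using hcont.tendsto x
  filter_upwards [Metric.ball_mem_nhds x hr, hstep (Metric.ball_mem_nhds x hr), hPL]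
    with z hz hzstep hzPL hker
  exact (convex_ball x r).gradient_eq_zero_of_hessian_apply_eq_zero
    (fun w _ => (hf.differentiable (by norm_num)) w) (fun w _ => (hG.differentiable one_ne_zero) w)
    hμ (fun w hw => mem_closedBall_iff_norm.1 (hball w hw).1) (fun w hw => (hball w hw).2) hz
    hzPL hzstep hker

theorem IsOpen.isLocalMin_and_eq_iff_gradient_eq_zero {U : Set E} (hU : IsOpen U) {m c : ℝ}
    (hmin : ∀ z ∈ U, m ≤ f z) (hPL : ∀ z ∈ U, f z - m ≤ c * ‖gradient f z‖ ^ 2) (hx : x ∈ U) :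
    IsLocalMin f x ∧ f x = m ↔ gradient f x = 0 := by
  refine ⟨fun h => h.1.gradient_eq_zero, fun h => ?_⟩
  have hfx : f x = m := le_antisymm (by simpa [h] using hPL x hx) (hmin x hx)
  exact ⟨eventually_of_mem (hU.mem_nhds hx) fun z hz => hfx ▸ hmin z hz, hfx⟩

end Gradient

section LinearAlgebra

variable {E : Type*} [NormedAddCommGroup E] [InnerProductSpace ℝ E] [FiniteDimensional ℝ E]

theorem LinearMap.IsSymmetric.mul_norm_sq_le_inner_of_mem_orthogonal_ker
    {T : E →ₗ[ℝ] E} (hT : T.IsSymmetric) {μ : ℝ} (hnonneg : ∀ v, 0 ≤ ⟪T v, v⟫)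
    (hsq : ∀ v, μ * ⟪T v, v⟫ ≤ ‖T v‖ ^ 2) {v : E} (hv : v ∈ (LinearMap.ker T)ᗮ) :
    μ * ‖v‖ ^ 2 ≤ ⟪v, T v⟫ := by
  set b := hT.eigenvectorBasis rfl
  set eig := hT.eigenvalues rfl
  have hb : ∀ i, T (b i) = eig i • b i := fun i => by
    have := hT.apply_eigenvectorBasis rfl i
    rwa [RCLike.ofReal_real_eq_id, id_eq] at this
  have heig : ∀ i, eig i = 0 ∨ μ ≤ eig i := by
    intro i
    have hquad : ⟪T (b i), b i⟫ = eig i := by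
      rw [hb, real_inner_smul_left, real_inner_self_eq_norm_sq, b.orthonormal.1 i]; ring
    have hnorm : ‖T (b i)‖ ^ 2 = eig i ^ 2 := by
      rw [hb, norm_smul, b.orthonormal.1 i, mul_one, Real.norm_eq_abs, sq_abs]
    have h0 := hnonneg (b i)
    have h1 := hsq (b i)
    rw [hquad] at h0 h1
    rw [hnorm] at h1
    rcases h0.eq_or_lt with h | h
    · exact Or.inl h.symm
    · exact Or.inr (le_of_mul_le_mul_right (by nlinarith) h)
  have hTv : ⟪v, T v⟫ = ∑ i, eig i * ⟪v, b i⟫ ^ 2 := by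
    rw [← b.sum_inner_mul_inner v (T v)]
    refine Finset.sum_congr rfl fun i _ => ?_
    rw [← hT, hb, real_inner_smul_left, real_inner_comm (b i) v]
    ring
  have hvv : ‖v‖ ^ 2 = ∑ i, ⟪v, b i⟫ ^ 2 := by
    rw [← real_inner_self_eq_norm_sq, ← b.sum_inner_mul_inner v v]
    refine Finset.sum_congr rfl fun i _ => ?_
    rw [real_inner_comm (b i) v, sq]
  rw [hTv, hvv, Finset.mul_sum]
  refine Finset.sum_le_sum fun i _ => ?_
  rcases heig i with h | h
  · have : ⟪v, b i⟫ = 0 := by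
      rw [real_inner_comm]
      exact hv (b i) (by simp [hb, h])
    simp [this]
  · exact mul_le_mul_of_nonneg_right h (sq_nonneg _)

theorem LinearMap.IsSymmetric.exists_ker_eq_and_surjective_comp
    {T : E →L[ℝ] E} (hT : (T : E →ₗ[ℝ] E).IsSymmetric) :
    ∃ (d : ℕ) (A : E →L[ℝ] EuclideanSpace ℝ (Fin d)),
      (∀ w, A w = 0 ↔ T w = 0) ∧
      LinearMap.ker ((A ∘L T : E →L[ℝ] _) : E →ₗ[ℝ] EuclideanSpace ℝ (Fin d)) =
        LinearMap.ker (T : E →ₗ[ℝ] E) ∧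
      Function.Surjective (A ∘L T) := by
  set K := LinearMap.range (T : E →ₗ[ℝ] E)
  set L := (stdOrthonormalBasis ℝ K).repr
  set A := L.toContinuousLinearEquiv.toContinuousLinearMap ∘L K.orthogonalProjectionOnto
  have hTK : ∀ v, T v ∈ K := fun v => LinearMap.mem_range_self _ v
  have hAT : ∀ v, A (T v) = L ⟨T v, hTK v⟩ := fun v =>
    congrArg L (Submodule.orthogonalProjectionOnto_mem_subspace_eq_self ⟨T v, hTK v⟩)
  refine ⟨_, A, ?_, ?_, fun y => ?_⟩
  · intro w
    simpa [A, K] using SetLike.ext_iff.1 hT.orthogonal_range w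
  · ext v
    simp [hAT, Submodule.mk_eq_zero]
  · obtain ⟨v, hv⟩ := (L.symm y).2
    refine ⟨v, ?_⟩
    rw [ContinuousLinearMap.comp_apply, hAT, ← L.apply_symm_apply y]
    exact congrArg L (Subtype.ext hv)

end LinearAlgebra

theorem ContinuousAt.eventually_surjective {X F F' : Type*} [TopologicalSpace X]
    [NormedAddCommGroup F] [NormedSpace ℝ F] [NormedAddCommGroup F'] [NormedSpace ℝ F']
    [FiniteDimensional ℝ F'] {L : X → F →L[ℝ] F'} {x₀ : X} (hL : ContinuousAt L x₀)
    (h : Function.Surjective (L x₀)) : ∀ᶠ x in 𝓝 x₀, Function.Surjective (L x) := by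
  obtain ⟨R, hR⟩ := (L x₀ : F →ₗ[ℝ] F').exists_rightInverse_of_surjective
    (LinearMap.range_eq_top.2 h)
  set R' := LinearMap.toContinuousLinearMap R
  have hunit : IsUnit (L x₀ ∘L R') := by
    convert isUnit_one (M := F' →L[ℝ] F')
    exact ContinuousLinearMap.ext fun y => LinearMap.congr_fun hR y
  -- `L x ∘ R'` is close to the identity, hence invertible
  filter_upwards [(hL.clm_comp continuousAt_const).eventually (Units.isOpen.mem_nhds hunit)]
    with x ⟨u, hu⟩ y
  refine ⟨R' (u⁻¹.val y), ?_⟩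
  change (L x ∘L R') (u⁻¹.val y) = y
  rw [← hu]
  exact DFunLike.congr_fun u.mul_inv y

/-- The submanifold `S` is encoded by a local defining function `φ` with surjective differential,
so that `T_{xb}S = ker Dφ(xb)` and `N_{xb}S = (ker Dφ(xb))ᗮ`. -/
theorem pl_implies_mb {n : ℕ}
    (f : EuclideanSpace ℝ (Fin n) → ℝ) (xb : EuclideanSpace ℝ (Fin n))
    (hf : ContDiff ℝ 2 f) (hmin : IsLocalMin f xb)
    (μ : ℝ) (hμ : 0 < μ)
    (S : Set (EuclideanSpace ℝ (Fin n)))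
    (hS : S = {y | IsLocalMin f y ∧ f y = f xb})
    (hPL : ∀ᶠ x in 𝓝 xb, f x - f xb ≤ (1 / (2 * μ)) * ‖gradient f x‖ ^ 2) :
    ∃ (d : ℕ) (U : Set (EuclideanSpace ℝ (Fin n)))
      (φ : EuclideanSpace ℝ (Fin n) → EuclideanSpace ℝ (Fin d)),
      IsOpen U ∧ xb ∈ U ∧ ContDiffOn ℝ 1 φ U ∧
      (∀ x ∈ U, Function.Surjective (fderiv ℝ φ x)) ∧
      S ∩ U = {x ∈ U | φ x = 0} ∧
      LinearMap.ker (fderiv ℝ (gradient f) xb : EuclideanSpace ℝ (Fin n) →ₗ[ℝ] EuclideanSpace ℝ (Fin n)) =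
        LinearMap.ker (fderiv ℝ φ xb : EuclideanSpace ℝ (Fin n) →ₗ[ℝ] EuclideanSpace ℝ (Fin d)) ∧
      ∀ v ∈ (LinearMap.ker (fderiv ℝ φ xb : EuclideanSpace ℝ (Fin n) →ₗ[ℝ] EuclideanSpace ℝ (Fin d)))ᗮ,
        μ * ‖v‖ ^ 2 ≤ ⟪v, fderiv ℝ (gradient f) xb v⟫ := by
  have hG : ContDiff ℝ 1 (gradient f) := hf.gradient (by norm_num)
  have hGd : Differentiable ℝ (gradient f) := hG.differentiable one_ne_zero
  have hfd : ∀ᶠ z in 𝓝 xb, DifferentiableAt ℝ f z :=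
    Eventually.of_forall (hf.differentiable (by norm_num))
  have hsymm := (hf.contDiffAt (x := xb)).isSymmetric_fderiv_gradient
  obtain ⟨d, A, hkerA, hkerAH, hsurjAH⟩ := hsymm.exists_ker_eq_and_surjective_comp
  have hDφ : ∀ x, fderiv ℝ (fun y => A (gradient f y)) x = A ∘L fderiv ℝ (gradient f) x :=
    fun x => (A.hasFDerivAt.comp x (hGd x).hasFDerivAt).fderiv
  have hsurj : ∀ᶠ x in 𝓝 xb, Function.Surjective (fderiv ℝ (fun y => A (gradient f y)) x) := by
    simp only [hDφ]
    exact (continuousAt_const.clm_comp (hG.continuous_fderiv one_ne_zero).continuousAt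
      ).eventually_surjective hsurjAH
  obtain ⟨U, hU, hUo, hxbU⟩ := eventually_nhds_iff.1 <| hmin.and <| hPL.and <|
    (eventually_gradient_eq_zero_of_hessian_apply_eq_zero hf hmin hμ hPL).and hsurj
  refine ⟨d, U, fun y => A (gradient f y), hUo, hxbU, (A.contDiff.comp hG).contDiffOn,
    fun x hx => (hU x hx).2.2.2, ?_, by rw [hDφ, hkerAH], fun v hv => ?_⟩
  · ext x
    simp only [hS, mem_inter_iff, mem_ofPred_eq]
    refine and_comm.trans (and_congr_right fun hx => ?_)
    rw [hUo.isLocalMin_and_eq_iff_gradient_eq_zero (fun z hz => (hU z hz).1)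
      (fun z hz => (hU z hz).2.1) hx]
    exact ⟨fun h => by simp [h],
      fun h => (hU x hx).2.2.1 ((hkerA _).1 h)⟩
  · rw [hDφ, hkerAH] at hv
    exact hsymm.mul_norm_sq_le_inner_of_mem_orthogonal_ker
      (hmin.inner_hessian_nonneg hfd (hGd xb).hasFDerivAt)
      (inner_hessian_mul_le_of_pl hμ hPL hfd (hGd xb).hasFDerivAt hmin.gradient_eq_zero) hv
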